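/- arXiv:1009.5835 — 6 statements merged into one kernel-verified Lean document; each statement's English description precedes it below -/
import Mathlib

section
/- Let l_1, ..., l_11 be nonnegative integers with l_1 g_1 + l_2 g_2 + ... + l_11 g_11 = 0 in G. Then l_1 ≡ l_2 + l_5 + l_6 + l_8 + l_9 + (n-1)(l_7 + l_11) (mod 2n), l_3 ≡ l_2 + l_6 + l_7 + n(l_8 + l_10) (mod 2n), and l_4 ≡ l_2 + n·l_6 + l_8 + l_11 (mod 2n). -/
/-- The group `G = C_2 ⊕ C_{2n}^4`. -/
abbrev Gn (n : ℕ) := ZMod 2 × ZMod (2 * n) × ZMod (2 * n) × ZMod (2 * n) × ZMod (2 * n)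

/-- `g₁ = e₁ + e₂`. -/
def g1 (n : ℕ) : Gn n := (1, 1, 0, 0, 0)
/-- `g₂ = e₁ + e₃`. -/
def g2 (n : ℕ) : Gn n := (1, 0, 1, 0, 0)
/-- `g₃ = e₁ + e₄`. -/
def g3 (n : ℕ) : Gn n := (1, 0, 0, 1, 0)
/-- `g₄ = e₁ + e₅`. -/
def g4 (n : ℕ) : Gn n := (1, 0, 0, 0, 1)
def g5 (n : ℕ) : Gn n :=
  (0, (((3*n-1)/2 : ℕ) : ZMod (2*n)), (((3*n+1)/2 : ℕ) : ZMod (2*n)),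
      (((3*n+1)/2 : ℕ) : ZMod (2*n)), (((3*n+1)/2 : ℕ) : ZMod (2*n)))
def g6 (n : ℕ) : Gn n :=
  (0, (((3*n-1)/2 : ℕ) : ZMod (2*n)), (((3*n+1)/2 : ℕ) : ZMod (2*n)),
      (((3*n-1)/2 : ℕ) : ZMod (2*n)), (((n+1)/2 : ℕ) : ZMod (2*n)))
def g7 (n : ℕ) : Gn n :=
  (0, (((3*n+3)/2 : ℕ) : ZMod (2*n)), (((n+1)/2 : ℕ) : ZMod (2*n)),
      (((n-1)/2 : ℕ) : ZMod (2*n)), (((n+1)/2 : ℕ) : ZMod (2*n)))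
def g8 (n : ℕ) : Gn n :=
  (0, (((n-1)/2 : ℕ) : ZMod (2*n)), (((n+1)/2 : ℕ) : ZMod (2*n)),
      (((3*n+1)/2 : ℕ) : ZMod (2*n)), (((n-1)/2 : ℕ) : ZMod (2*n)))
def g9 (n : ℕ) : Gn n :=
  (0, (((n-1)/2 : ℕ) : ZMod (2*n)), (((n+1)/2 : ℕ) : ZMod (2*n)),
      (((n+1)/2 : ℕ) : ZMod (2*n)), (((n+1)/2 : ℕ) : ZMod (2*n)))
def g10 (n : ℕ) : Gn n :=
  (0, (((3*n+1)/2 : ℕ) : ZMod (2*n)), (((3*n+1)/2 : ℕ) : ZMod (2*n)),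
      (((n+1)/2 : ℕ) : ZMod (2*n)), (((3*n+1)/2 : ℕ) : ZMod (2*n)))
def g11 (n : ℕ) : Gn n :=
  (0, (((n+3)/2 : ℕ) : ZMod (2*n)), (((3*n+1)/2 : ℕ) : ZMod (2*n)),
      (((3*n+1)/2 : ℕ) : ZMod (2*n)), (((3*n-1)/2 : ℕ) : ZMod (2*n)))
def g12 (n : ℕ) : Gn n :=
  (1, (((n+1)/2 : ℕ) : ZMod (2*n)), (((n-1)/2 : ℕ) : ZMod (2*n)),
      (((n+1)/2 : ℕ) : ZMod (2*n)), (((3*n+1)/2 : ℕ) : ZMod (2*n)))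


/-- If nonnegative integers `l₁,…,l₁₁` satisfy `l₁g₁ + ⋯ + l₁₁g₁₁ = 0` in `G`,
then the three derived congruences (6)–(8) modulo `2n` hold. -/
theorem congruences_mod_2n (n : ℕ) (hn : 3 ≤ n) (hodd : Odd n)
    (l1 l2 l3 l4 l5 l6 l7 l8 l9 l10 l11 : ℕ)
    (hsum : l1 • g1 n + l2 • g2 n + l3 • g3 n + l4 • g4 n + l5 • g5 n +
      l6 • g6 n + l7 • g7 n + l8 • g8 n + l9 • g9 n + l10 • g10 n +
      l11 • g11 n = 0) :
    l1 ≡ l2 + l5 + l6 + l8 + l9 + (n-1) * (l7 + l11) [MOD 2*n] ∧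
    l3 ≡ l2 + l6 + l7 + n * (l8 + l10) [MOD 2*n] ∧
    l4 ≡ l2 + n * l6 + l8 + l11 [MOD 2*n] := by

  obtain ⟨k, hk⟩ := hodd
  subst hk
  have ha : (3*(2*k+1)-1)/2 = 3*k+1 := by omega
  have hb : (3*(2*k+1)+1)/2 = 3*k+2 := by omega
  have hc : ((2*k+1)+1)/2 = k+1 := by omega
  have hd : ((2*k+1)-1)/2 = k := by omega
  have he : (3*(2*k+1)+3)/2 = 3*k+3 := by omega
  have hf : ((2*k+1)+3)/2 = k+2 := by omega
  simp only [g1, g2, g3, g4, g5, g6, g7, g8, g9, g10, g11, ha, hb, hc, hd, he, hf,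
    Prod.smul_mk, Prod.mk_add_mk, Prod.ext_iff, Prod.fst_zero, Prod.snd_zero,
    smul_zero, add_zero, zero_add] at hsum
  obtain ⟨h1, h2, h3, h4, h5⟩ := hsum
  have hz : ((2*(2*k+1) : ℕ) : ZMod (2*(2*k+1))) = 0 := ZMod.natCast_self _
  have hne : (2*k+1) - 1 = 2*k := by omega
  rw [hne]
  push_cast [nsmul_eq_mul] at h2 h3 h4 h5 hz
  refine ⟨?_, ?_, ?_⟩
  · refine (ZMod.natCast_eq_natCast_iff _ _ _).mp ?_
    push_cast
    linear_combination h2 - h3 - (l7 : ZMod (2*(2*k+1))) * hz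
  · refine (ZMod.natCast_eq_natCast_iff _ _ _).mp ?_
    push_cast
    linear_combination h4 - h3 - (l8 : ZMod (2*(2*k+1))) * hz
  · refine (ZMod.natCast_eq_natCast_iff _ _ _).mp ?_
    push_cast
    linear_combination h5 - h3
end

section
/- Let l_1, ..., l_11 be nonnegative integers with l_1 g_1 + l_2 g_2 + ... + l_11 g_11 = 0 in G. Then l_5 + l_6 + l_7 + l_8 + l_9 + l_10 + l_11 ≡ 0 (mod 2). -/
/-- Auxiliary additive homomorphism summing all coordinates mod 2. -/
def phiG (n : ℕ) : Gn n →+ ZMod 2 where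
  toFun x := x.1 + ZMod.castHom (Dvd.intro n rfl) (ZMod 2) (x.2.1 + x.2.2.1 + x.2.2.2.1 + x.2.2.2.2)
  map_zero' := by simp
  map_add' x y := by
    simp only [Prod.fst_add, Prod.snd_add, map_add]
    ring

/-- If nonnegative integers `l₁,…,l₁₁` satisfy `l₁g₁ + ⋯ + l₁₁g₁₁ = 0` in `G`,
then `l₅ + l₆ + l₇ + l₈ + l₉ + l₁₀ + l₁₁ ≡ 0 (mod 2)`. -/
theorem sum_l5_to_l11_even (n : ℕ) (hn : 3 ≤ n) (hodd : Odd n)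
    (l1 l2 l3 l4 l5 l6 l7 l8 l9 l10 l11 : ℕ)
    (hsum : l1 • g1 n + l2 • g2 n + l3 • g3 n + l4 • g4 n + l5 • g5 n +
      l6 • g6 n + l7 • g7 n + l8 • g8 n + l9 • g9 n + l10 • g10 n +
      l11 • g11 n = 0) :
    l5 + l6 + l7 + l8 + l9 + l10 + l11 ≡ 0 [MOD 2] := by
  obtain ⟨m, hm⟩ := hodd
  subst hm
  have key := congrArg (phiG (2*m+1)) hsum
  have e1 : (3*(2*m+1)-1)/2 = 3*m+1 := by omega
  have e2 : (3*(2*m+1)+1)/2 = 3*m+2 := by omega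
  have e3 : ((2*m+1)+1)/2 = m+1 := by omega
  have e4 : ((2*m+1)-1)/2 = m := by omega
  have e5 : (3*(2*m+1)+3)/2 = 3*m+3 := by omega
  have e6 : ((2*m+1)+3)/2 = m+2 := by omega
  simp only [map_add, map_nsmul, map_zero, phiG, g1, g2, g3, g4, g5, g6, g7, g8, g9,
    g10, g11, AddMonoidHom.coe_mk, ZeroHom.coe_mk, e1, e2, e3, e4, e5, e6,
    map_natCast, map_zero, map_one] at key
  have hgoal : ((l5 + l6 + l7 + l8 + l9 + l10 + l11 : ℕ) : ZMod 2) = ((0 : ℕ) : ZMod 2) := by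
    push_cast at key ⊢
    have h2 : (2 : ZMod 2) = 0 := by decide
    linear_combination key - (l1+l2+l3+l4+l5*(6*m+3)+l6*(5*m+2)+l7*(3*m+2)+l8*(3*m+1)
      + l9*(2*m+1) + l10*(5*m+3) + l11*(5*m+3)) * h2
  exact (ZMod.natCast_eq_natCast_iff _ _ _).mp hgoal
end

section
/- Let l_1 ∈ [0, 2n-2], l_2 ∈ [0, 2n-3], l_3 ∈ [0, 2n-2], l_4 ∈ [0, 2n-2], and l_5, ..., l_11 ∈ {0,1} be integers with l_1 g_1 + l_2 g_2 + ... + l_11 g_11 = 0 in G. Then 2 l_2 + (n+1)(l_5 + l_6 + l_7 + l_8 + l_9 + l_10 + l_11) ≡ 0 (mod 2n); consequently, if l_5 + ... + l_11 = 2 then l_2 = n-1, if l_5 + ... + l_11 = 4 then l_2 = n-2, and if l_5 + ... + l_11 = 6 then l_2 ∈ {n-3, 2n-3}. -/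
lemma mult_le_two (n m : ℕ) (hn : 0 < n) (hd : n ∣ m) (h1 : 0 < m) (h2 : m ≤ 2*n) :
    m = n ∨ m = 2*n := by
  obtain ⟨c, rfl⟩ := hd
  have hc1 : 1 ≤ c := by
    rcases Nat.eq_zero_or_pos c with h | h
    · simp [h] at h1
    · exact h
  have hc2 : c ≤ 2 := by
    by_contra h
    have : n * 3 ≤ n * c := Nat.mul_le_mul_left n (by omega)
    omega
  interval_cases c <;> omega
/-- Under the stated range constraints and `l₁g₁ + ⋯ + l₁₁g₁₁ = 0` in `G`,
one has `2l₂ + (n+1)(l₅+⋯+l₁₁) ≡ 0 (mod 2n)`; consequently, if `l₅+⋯+l₁₁ = 2`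
then `l₂ = n-1`, if it is `4` then `l₂ = n-2`, and if it is `6` then
`l₂ ∈ {n-3, 2n-3}`. -/
theorem l2_determined (n : ℕ) (hn : 3 ≤ n) (hodd : Odd n)
    (l1 l2 l3 l4 l5 l6 l7 l8 l9 l10 l11 : ℕ)
    (h1 : l1 ≤ 2*n-2) (h2 : l2 ≤ 2*n-3) (h3 : l3 ≤ 2*n-2) (h4 : l4 ≤ 2*n-2)
    (h5 : l5 ≤ 1) (h6 : l6 ≤ 1) (h7 : l7 ≤ 1) (h8 : l8 ≤ 1) (h9 : l9 ≤ 1)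
    (h10 : l10 ≤ 1) (h11 : l11 ≤ 1)
    (hsum : l1 • g1 n + l2 • g2 n + l3 • g3 n + l4 • g4 n + l5 • g5 n +
      l6 • g6 n + l7 • g7 n + l8 • g8 n + l9 • g9 n + l10 • g10 n +
      l11 • g11 n = 0) :
    2 * l2 + (n+1) * (l5 + l6 + l7 + l8 + l9 + l10 + l11) ≡ 0 [MOD 2*n] ∧
    (l5 + l6 + l7 + l8 + l9 + l10 + l11 = 2 → l2 = n - 1) ∧
    (l5 + l6 + l7 + l8 + l9 + l10 + l11 = 4 → l2 = n - 2) ∧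
    (l5 + l6 + l7 + l8 + l9 + l10 + l11 = 6 → l2 = n - 3 ∨ l2 = 2*n - 3) := by
  obtain ⟨k, hk⟩ := hodd
  have h := congrArg (fun p : Gn n => p.2.2.1) hsum
  simp only [g1,g2,g3,g4,g5,g6,g7,g8,g9,g10,g11, Prod.smul_mk, Prod.mk_add_mk,
    smul_zero, Prod.snd_zero, Prod.fst_zero, smul_eq_mul, mul_one,
    nsmul_eq_mul] at h
  have ea : (3 * n + 1) / 2 = 3*k+2 := by omega
  have eb : (n + 1) / 2 = k+1 := by omega
  rw [ea, eb] at h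
  have key : 2 * l2 + (n+1) * (l5 + l6 + l7 + l8 + l9 + l10 + l11) ≡ 0 [MOD 2*n] := by
    have hcast : ((2 * l2 + (n+1) * (l5 + l6 + l7 + l8 + l9 + l10 + l11) : ℕ) :
        ZMod (2*n)) = ((0 : ℕ) : ZMod (2*n)) := by
      have h2n : ((2*n : ℕ) : ZMod (2*n)) = 0 := ZMod.natCast_self _
      push_cast [hk] at h h2n ⊢
      linear_combination 2*h - (l5+l6+l10+l11) * h2n
    exact (ZMod.natCast_eq_natCast_iff _ _ _).mp hcast
  refine ⟨key, ?_, ?_, ?_⟩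
  · intro hS
    rw [hS, Nat.ModEq, Nat.zero_mod, ← Nat.dvd_iff_mod_eq_zero] at key
    have key' : 2*n ∣ 2*(l2+1+n) := by
      have e : 2 * l2 + (n + 1) * 2 = 2*(l2+1+n) := by ring
      rwa [e] at key
    have hd : n ∣ l2 + 1 := by
      have h' : n ∣ l2 + 1 + n :=
        (Nat.mul_dvd_mul_iff_left (by norm_num : 0 < 2)).mp key'
      simpa using Nat.dvd_sub h' (dvd_refl n)
    have := mult_le_two n (l2+1) (by omega) hd (by omega) (by omega)
    omega
  · intro hS
    rw [hS, Nat.ModEq, Nat.zero_mod, ← Nat.dvd_iff_mod_eq_zero] at key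
    have key' : 2*n ∣ 2*(l2+2+2*n) := by
      have e : 2 * l2 + (n + 1) * 4 = 2*(l2+2+2*n) := by ring
      rwa [e] at key
    have hd : n ∣ l2 + 2 := by
      have h' : n ∣ l2 + 2 + 2*n :=
        (Nat.mul_dvd_mul_iff_left (by norm_num : 0 < 2)).mp key'
      simpa using Nat.dvd_sub h' (dvd_mul_left n 2)
    have := mult_le_two n (l2+2) (by omega) hd (by omega) (by omega)
    omega
  · intro hS
    rw [hS, Nat.ModEq, Nat.zero_mod, ← Nat.dvd_iff_mod_eq_zero] at key
    have key' : 2*n ∣ 2*(l2+3+3*n) := by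
      have e : 2 * l2 + (n + 1) * 6 = 2*(l2+3+3*n) := by ring
      rwa [e] at key
    have hd : n ∣ l2 + 3 := by
      have h' : n ∣ l2 + 3 + 3*n :=
        (Nat.mul_dvd_mul_iff_left (by norm_num : 0 < 2)).mp key'
      simpa using Nat.dvd_sub h' (dvd_mul_left n 3)
    have := mult_le_two n (l2+3) (by omega) hd (by omega) (by omega)
    omega
end

section
/- There exist no integers l_1 ∈ [0, 2n-2], l_2 ∈ [0, 2n-3], l_3 ∈ [0, 2n-2], l_4 ∈ [0, 2n-2], l_5, ..., l_11 ∈ {0,1} with l_1 g_1 + l_2 g_2 + ... + l_11 g_11 = 0 in G and l_5 + l_6 + l_7 + l_8 + l_9 + l_10 + l_11 = 2. -/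
/-! Write `n = 2m + 1`. The `e₂, …, e₅`-coordinates of `l₁g₁ + ⋯ + l₄g₄` are `l₁, …, l₄`, all at
most `2n - 2`. For any two of `g₅, …, g₁₁` some coordinate among `e₂, …, e₅` carries coefficients
summing to `2n + 1 ≡ 1 (mod 2n)` (always one of `(3m+1) + (m+2)`, `(3m+2) + (m+1)`,
`(3m+3) + m`), so the corresponding `lₖ` would have to be `≡ -1`, i.e. at least `2n - 1`. -/

def tailCoords (n l5 l6 l7 l8 l9 l10 l11 : ℕ) : ℕ × ℕ × ℕ × ℕ :=
  (l5 * ((3*n-1)/2) + l6 * ((3*n-1)/2) + l7 * ((3*n+3)/2) + l8 * ((n-1)/2) + l9 * ((n-1)/2) +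
      l10 * ((3*n+1)/2) + l11 * ((n+3)/2),
    l5 * ((3*n+1)/2) + l6 * ((3*n+1)/2) + l7 * ((n+1)/2) + l8 * ((n+1)/2) + l9 * ((n+1)/2) +
      l10 * ((3*n+1)/2) + l11 * ((3*n+1)/2),
    l5 * ((3*n+1)/2) + l6 * ((3*n-1)/2) + l7 * ((n-1)/2) + l8 * ((3*n+1)/2) + l9 * ((n+1)/2) +
      l10 * ((n+1)/2) + l11 * ((3*n+1)/2),
    l5 * ((3*n+1)/2) + l6 * ((n+1)/2) + l7 * ((n+1)/2) + l8 * ((n-1)/2) + l9 * ((n+1)/2) +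
      l10 * ((3*n+1)/2) + l11 * ((3*n-1)/2))

theorem sum_nsmul_g_eq (n l1 l2 l3 l4 l5 l6 l7 l8 l9 l10 l11 : ℕ) :
    let t := tailCoords n l5 l6 l7 l8 l9 l10 l11
    l1 • g1 n + l2 • g2 n + l3 • g3 n + l4 • g4 n + l5 • g5 n + l6 • g6 n + l7 • g7 n +
        l8 • g8 n + l9 • g9 n + l10 • g10 n + l11 • g11 n =
      (((l1 + l2 + l3 + l4 : ℕ) : ZMod 2), ((l1 + t.1 : ℕ) : ZMod (2 * n)),
        ((l2 + t.2.1 : ℕ) : ZMod (2 * n)), ((l3 + t.2.2.1 : ℕ) : ZMod (2 * n)),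
        ((l4 + t.2.2.2 : ℕ) : ZMod (2 * n))) := by
  simp only [g1, g2, g3, g4, g5, g6, g7, g8, g9, g10, g11, tailCoords, Prod.smul_mk,
    Prod.mk_add_mk, nsmul_eq_mul]
  push_cast
  ring_nf

theorem tailCoords_eq_two_mul_add_one (n l5 l6 l7 l8 l9 l10 l11 : ℕ) (hn : Odd n)
    (h5 : l5 ≤ 1) (h6 : l6 ≤ 1) (h7 : l7 ≤ 1) (h8 : l8 ≤ 1) (h9 : l9 ≤ 1) (h10 : l10 ≤ 1)
    (h11 : l11 ≤ 1) (hsum : l5 + l6 + l7 + l8 + l9 + l10 + l11 = 2) :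
    let t := tailCoords n l5 l6 l7 l8 l9 l10 l11
    t.1 = 2 * n + 1 ∨ t.2.1 = 2 * n + 1 ∨ t.2.2.1 = 2 * n + 1 ∨ t.2.2.2 = 2 * n + 1 := by
  obtain ⟨m, rfl⟩ := hn
  simp only [tailCoords]
  interval_cases l5 <;> interval_cases l6 <;> interval_cases l7 <;> interval_cases l8 <;>
    interval_cases l9 <;> interval_cases l10 <;> interval_cases l11 <;> omega

theorem natCast_add_ne_zero_of_eq_add_one {N l t : ℕ} (hl : l + 1 < N) (ht : t = N + 1) :
    ((l + t : ℕ) : ZMod N) ≠ 0 := by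
  rw [Ne, ZMod.natCast_eq_zero_iff, ht, add_left_comm, Nat.dvd_add_self_left]
  exact Nat.not_dvd_of_pos_of_lt l.succ_pos hl

theorem no_solution_case_2_general (n : ℕ) (hodd : Odd n) :
    ¬ ∃ l1 l2 l3 l4 l5 l6 l7 l8 l9 l10 l11 : ℕ,
      l1 ≤ 2*n-2 ∧ l2 ≤ 2*n-3 ∧ l3 ≤ 2*n-2 ∧ l4 ≤ 2*n-2 ∧
      l5 ≤ 1 ∧ l6 ≤ 1 ∧ l7 ≤ 1 ∧ l8 ≤ 1 ∧ l9 ≤ 1 ∧ l10 ≤ 1 ∧ l11 ≤ 1 ∧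
      l1 • g1 n + l2 • g2 n + l3 • g3 n + l4 • g4 n + l5 • g5 n +
        l6 • g6 n + l7 • g7 n + l8 • g8 n + l9 • g9 n + l10 • g10 n +
        l11 • g11 n = 0 ∧
      l5 + l6 + l7 + l8 + l9 + l10 + l11 = 2 := by
  rintro ⟨l1, l2, l3, l4, l5, l6, l7, l8, l9, l10, l11,
    hl1, hl2, hl3, hl4, hl5, hl6, hl7, hl8, hl9, hl10, hl11, heq, hsum⟩
  have hpos : 0 < n := hodd.pos
  simp only [sum_nsmul_g_eq, Prod.mk_eq_zero] at heq
  obtain ⟨-, h1, h2, h3, h4⟩ := heq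
  rcases tailCoords_eq_two_mul_add_one n l5 l6 l7 l8 l9 l10 l11 hodd
    hl5 hl6 hl7 hl8 hl9 hl10 hl11 hsum with ht | ht | ht | ht
  · exact natCast_add_ne_zero_of_eq_add_one (by omega) ht h1
  · exact natCast_add_ne_zero_of_eq_add_one (by omega) ht h2
  · exact natCast_add_ne_zero_of_eq_add_one (by omega) ht h3
  · exact natCast_add_ne_zero_of_eq_add_one (by omega) ht h4

/-- There are no integers in the stated ranges with
`l₁g₁ + ⋯ + l₁₁g₁₁ = 0` in `G` and `l₅ + l₆ + l₇ + l₈ + l₉ + l₁₀ + l₁₁ = 2`. -/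
theorem no_solution_case_2 (n : ℕ) (hn : 3 ≤ n) (hodd : Odd n) :
    ¬ ∃ l1 l2 l3 l4 l5 l6 l7 l8 l9 l10 l11 : ℕ,
      l1 ≤ 2*n-2 ∧ l2 ≤ 2*n-3 ∧ l3 ≤ 2*n-2 ∧ l4 ≤ 2*n-2 ∧
      l5 ≤ 1 ∧ l6 ≤ 1 ∧ l7 ≤ 1 ∧ l8 ≤ 1 ∧ l9 ≤ 1 ∧ l10 ≤ 1 ∧ l11 ≤ 1 ∧
      l1 • g1 n + l2 • g2 n + l3 • g3 n + l4 • g4 n + l5 • g5 n +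
        l6 • g6 n + l7 • g7 n + l8 • g8 n + l9 • g9 n + l10 • g10 n +
        l11 • g11 n = 0 ∧
      l5 + l6 + l7 + l8 + l9 + l10 + l11 = 2 :=
  no_solution_case_2_general n hodd
end

section
/- There exist no integers l_1 ∈ [0, 2n-2], l_2 ∈ [0, 2n-3], l_3 ∈ [0, 2n-2], l_4 ∈ [0, 2n-2], l_5, ..., l_11 ∈ {0,1} with l_1 g_1 + l_2 g_2 + ... + l_11 g_11 = 0 in G and l_5 + l_6 + l_7 + l_8 + l_9 + l_10 + l_11 = 4. -/
private theorem quot5 (m e : ℕ) (hm : 1 ≤ m) (he : e ≤ 19*m+10) (hd : 2*(2*m+1) ∣ e) :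
    e = 0 ∨ e = 4*m+2 ∨ e = 8*m+4 ∨ e = 12*m+6 ∨ e = 16*m+8 := by
  obtain ⟨k, hk⟩ := hd
  have hk4 : k ≤ 4 := by nlinarith
  interval_cases k <;> omega

private theorem bnd (l c : ℕ) (h : l ≤ 1) : l * c ≤ c := by
  calc l * c ≤ 1 * c := Nat.mul_le_mul_right c h
  _ = c := one_mul c

set_option maxHeartbeats 4000000 in
/-- There are no integers in the stated ranges with
`l₁g₁ + ⋯ + l₁₁g₁₁ = 0` in `G` and `l₅ + l₆ + l₇ + l₈ + l₉ + l₁₀ + l₁₁ = 4`. -/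
theorem no_solution_case_4 (n : ℕ) (hn : 3 ≤ n) (hodd : Odd n) :
    ¬ ∃ l1 l2 l3 l4 l5 l6 l7 l8 l9 l10 l11 : ℕ,
      l1 ≤ 2*n-2 ∧ l2 ≤ 2*n-3 ∧ l3 ≤ 2*n-2 ∧ l4 ≤ 2*n-2 ∧
      l5 ≤ 1 ∧ l6 ≤ 1 ∧ l7 ≤ 1 ∧ l8 ≤ 1 ∧ l9 ≤ 1 ∧ l10 ≤ 1 ∧ l11 ≤ 1 ∧
      l1 • g1 n + l2 • g2 n + l3 • g3 n + l4 • g4 n + l5 • g5 n +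
        l6 • g6 n + l7 • g7 n + l8 • g8 n + l9 • g9 n + l10 • g10 n +
        l11 • g11 n = 0 ∧
      l5 + l6 + l7 + l8 + l9 + l10 + l11 = 4 := by
  obtain ⟨m, hm⟩ := hodd
  subst hm
  have hm1 : 1 ≤ m := by omega
  haveI : NeZero (2 * (2 * m + 1)) := ⟨by omega⟩
  rintro ⟨l1, l2, l3, l4, l5, l6, l7, l8, l9, l10, l11,
    h1, h2, h3, h4, h5, h6, h7, h8, h9, h10, h11, heq, hsum⟩
  have e1 : (3*(2*m+1)-1)/2 = 3*m+1 := by omega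
  have e2 : (3*(2*m+1)+1)/2 = 3*m+2 := by omega
  have e3 : ((2*m+1)+1)/2 = m+1 := by omega
  have e4 : ((2*m+1)-1)/2 = m := by omega
  have e5 : (3*(2*m+1)+3)/2 = 3*m+3 := by omega
  have e6 : ((2*m+1)+3)/2 = m+2 := by omega
  simp only [g1, g2, g3, g4, g5, g6, g7, g8, g9, g10, g11, e1, e2, e3, e4, e5, e6,
    Prod.smul_mk, Prod.mk_add_mk, Prod.mk_eq_zero, smul_zero, add_zero, zero_add,
    nsmul_eq_mul, mul_one, mul_zero] at heq
  obtain ⟨q1, q2, q3, q4, q5⟩ := heq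
  push_cast at q1 q2 q3 q4 q5
  have D1 : 2 ∣ (l1 + l2 + l3 + l4) := by
    have : ((l1 + l2 + l3 + l4 : ℕ) : ZMod 2) = 0 := by push_cast; linear_combination q1
    exact (ZMod.natCast_eq_zero_iff _ _).mp this
  have D2 : (2*(2*m+1)) ∣ (l1 + l5*(3*m+1) + l6*(3*m+1) + l7*(3*m+3) + l8*m + l9*m
      + l10*(3*m+2) + l11*(m+2)) := by
    apply (ZMod.natCast_eq_zero_iff _ _).mp
    push_cast
    linear_combination q2
  have D3 : (2*(2*m+1)) ∣ (l2 + l5*(3*m+2) + l6*(3*m+2) + l7*(m+1) + l8*(m+1) + l9*(m+1)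
      + l10*(3*m+2) + l11*(3*m+2)) := by
    apply (ZMod.natCast_eq_zero_iff _ _).mp
    push_cast
    linear_combination q3
  have D4 : (2*(2*m+1)) ∣ (l3 + l5*(3*m+2) + l6*(3*m+1) + l7*m + l8*(3*m+2) + l9*(m+1)
      + l10*(m+1) + l11*(3*m+2)) := by
    apply (ZMod.natCast_eq_zero_iff _ _).mp
    push_cast
    linear_combination q4
  have D5 : (2*(2*m+1)) ∣ (l4 + l5*(3*m+2) + l6*(m+1) + l7*(m+1) + l8*m + l9*(m+1)
      + l10*(3*m+2) + l11*(3*m+1)) := by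
    apply (ZMod.natCast_eq_zero_iff _ _).mp
    push_cast
    linear_combination q5
  have h1' : l1 ≤ 4*m := by omega
  have h2' : l2 ≤ 4*m-1 := by omega
  have h3' : l3 ≤ 4*m := by omega
  have h4' : l4 ≤ 4*m := by omega
  have E2 := quot5 m _ hm1 (by
    have := bnd l5 (3*m+1) h5; have := bnd l6 (3*m+1) h6; have := bnd l7 (3*m+3) h7
    have := bnd l8 m h8; have := bnd l9 m h9; have := bnd l10 (3*m+2) h10
    have := bnd l11 (m+2) h11; omega) D2
  have E3 := quot5 m _ hm1 (by
    have := bnd l5 (3*m+2) h5; have := bnd l6 (3*m+2) h6; have := bnd l7 (m+1) h7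
    have := bnd l8 (m+1) h8; have := bnd l9 (m+1) h9; have := bnd l10 (3*m+2) h10
    have := bnd l11 (3*m+2) h11; omega) D3
  have E4 := quot5 m _ hm1 (by
    have := bnd l5 (3*m+2) h5; have := bnd l6 (3*m+1) h6; have := bnd l7 m h7
    have := bnd l8 (3*m+2) h8; have := bnd l9 (m+1) h9; have := bnd l10 (m+1) h10
    have := bnd l11 (3*m+2) h11; omega) D4
  have E5 := quot5 m _ hm1 (by
    have := bnd l5 (3*m+2) h5; have := bnd l6 (m+1) h6; have := bnd l7 (m+1) h7
    have := bnd l8 m h8; have := bnd l9 (m+1) h9; have := bnd l10 (3*m+2) h10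
    have := bnd l11 (3*m+1) h11; omega) D5
  clear D2 D3 D4 D5 q1 q2 q3 q4 q5 h1 h2 h3 h4 e1 e2 e3 e4 e5 e6 hn this
  obtain rfl | rfl := Nat.le_one_iff_eq_zero_or_eq_one.mp h5 <;>
  obtain rfl | rfl := Nat.le_one_iff_eq_zero_or_eq_one.mp h6 <;>
  obtain rfl | rfl := Nat.le_one_iff_eq_zero_or_eq_one.mp h7 <;>
  obtain rfl | rfl := Nat.le_one_iff_eq_zero_or_eq_one.mp h8 <;>
  obtain rfl | rfl := Nat.le_one_iff_eq_zero_or_eq_one.mp h9 <;>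
  obtain rfl | rfl := Nat.le_one_iff_eq_zero_or_eq_one.mp h10 <;>
  obtain rfl | rfl := Nat.le_one_iff_eq_zero_or_eq_one.mp h11 <;>
  first
    | (exfalso; clear E2 E3 E4 E5 D1 h1' h2' h3' h4'; omega)
    | (clear E3 E4 E5 D1; omega)
    | (clear E2 E4 E5 D1; omega)
    | (clear E2 E3 E5 D1; omega)
    | (clear E2 E3 E4 D1; omega)
end

section
/- There exist no integers l_1 ∈ [0, 2n-2], l_2 ∈ [0, 2n-3], l_3 ∈ [0, 2n-2], l_4 ∈ [0, 2n-2], l_5, ..., l_11 ∈ {0,1} with l_1 g_1 + l_2 g_2 + ... + l_11 g_11 = 0 in G and l_5 + l_6 + l_7 + l_8 + l_9 + l_10 + l_11 = 6. -/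
/-- Helper: no `l ≤ 4k` has `l + 12k + 7` divisible by `4k + 2`. -/
lemma aux_no_mult (k l m : ℕ) (hb : l ≤ 4*k) (hm : l + (12*k+7) = m)
    (hd : 2*(2*k+1) ∣ m) : False := by
  obtain ⟨q, hq⟩ := hd
  have h3 : 2*(2*k+1)*3 < 2*(2*k+1)*q := by rw [← hq]; omega
  have h4 : 2*(2*k+1)*q < 2*(2*k+1)*4 := by rw [← hq]; omega
  have := Nat.lt_of_mul_lt_mul_left h3
  have := Nat.lt_of_mul_lt_mul_left h4
  omega


/-- Pure arithmetic core: the three divisibility constraints are contradictory. -/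
lemma aux_cases (k l1 l3 l4 l5 l6 l7 l8 l9 l10 l11 : ℕ)
    (b1 : l1 ≤ 4*k) (b3 : l3 ≤ 4*k) (b4 : l4 ≤ 4*k)
    (b5 : l5 ≤ 1) (b6 : l6 ≤ 1) (b7 : l7 ≤ 1) (b8 : l8 ≤ 1) (b9 : l9 ≤ 1)
    (b10 : l10 ≤ 1) (b11 : l11 ≤ 1)
    (hsum : l5 + l6 + l7 + l8 + l9 + l10 + l11 = 6)
    (d2 : 2*(2*k+1) ∣ l1 + l5*(3*k+1) + l6*(3*k+1) + l7*(3*k+3) + l8*k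
      + l9*k + l10*(3*k+2) + l11*(k+2))
    (d4 : 2*(2*k+1) ∣ l3 + l5*(3*k+2) + l6*(3*k+1) + l7*k + l8*(3*k+2)
      + l9*(k+1) + l10*(k+1) + l11*(3*k+2))
    (d5 : 2*(2*k+1) ∣ l4 + l5*(3*k+2) + l6*(k+1) + l7*(k+1) + l8*k
      + l9*(k+1) + l10*(3*k+2) + l11*(3*k+1)) : False := by
  interval_cases l5 <;> interval_cases l6 <;> interval_cases l7 <;>
    interval_cases l8 <;> interval_cases l9 <;> interval_cases l10 <;>
    interval_cases l11 <;>
  first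
    | omega
    | exact aux_no_mult k l3 _ b3 (by omega) d4
    | exact aux_no_mult k l4 _ b4 (by omega) d5
    | exact aux_no_mult k l1 _ b1 (by omega) d2

set_option maxHeartbeats 1000000 in
/-- There are no integers in the stated ranges with
`l₁g₁ + ⋯ + l₁₁g₁₁ = 0` in `G` and `l₅ + l₆ + l₇ + l₈ + l₉ + l₁₀ + l₁₁ = 6`. -/
theorem no_solution_case_6 (n : ℕ) (hn : 3 ≤ n) (hodd : Odd n) :
    ¬ ∃ l1 l2 l3 l4 l5 l6 l7 l8 l9 l10 l11 : ℕ,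
      l1 ≤ 2*n-2 ∧ l2 ≤ 2*n-3 ∧ l3 ≤ 2*n-2 ∧ l4 ≤ 2*n-2 ∧
      l5 ≤ 1 ∧ l6 ≤ 1 ∧ l7 ≤ 1 ∧ l8 ≤ 1 ∧ l9 ≤ 1 ∧ l10 ≤ 1 ∧ l11 ≤ 1 ∧
      l1 • g1 n + l2 • g2 n + l3 • g3 n + l4 • g4 n + l5 • g5 n +
        l6 • g6 n + l7 • g7 n + l8 • g8 n + l9 • g9 n + l10 • g10 n +
        l11 • g11 n = 0 ∧
      l5 + l6 + l7 + l8 + l9 + l10 + l11 = 6 := by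
  rintro ⟨l1, l2, l3, l4, l5, l6, l7, l8, l9, l10, l11,
    b1, b2, b3, b4, b5, b6, b7, b8, b9, b10, b11, h, hsum⟩
  obtain ⟨k, hk⟩ := hodd
  subst hk
  have hk1 : 1 ≤ k := by omega
  haveI : NeZero (2*(2*k+1)) := ⟨by omega⟩
  simp only [g1, g2, g3, g4, g5, g6, g7, g8, g9, g10, g11,
    show (3*(2*k+1)-1)/2 = 3*k+1 from by omega,
    show (3*(2*k+1)+1)/2 = 3*k+2 from by omega,
    show (3*(2*k+1)+3)/2 = 3*k+3 from by omega,
    show ((2*k+1)+1)/2 = k+1 from by omega,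
    show ((2*k+1)-1)/2 = k from by omega,
    show ((2*k+1)+3)/2 = k+2 from by omega,
    Prod.smul_mk, Prod.mk_add_mk, Prod.ext_iff, Prod.fst_zero, Prod.snd_zero,
    smul_eq_mul, nsmul_eq_mul, mul_zero, mul_one, add_zero, zero_add] at h
  obtain ⟨h1, h2, h3, h4, h5⟩ := h
  clear h1 h3
  have d2 : 2*(2*k+1) ∣ l1 + l5*(3*k+1) + l6*(3*k+1) + l7*(3*k+3) + l8*k
      + l9*k + l10*(3*k+2) + l11*(k+2) := by
    apply (ZMod.natCast_eq_zero_iff _ _).mp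
    push_cast at h2 ⊢
    linear_combination h2
  have d4 : 2*(2*k+1) ∣ l3 + l5*(3*k+2) + l6*(3*k+1) + l7*k + l8*(3*k+2)
      + l9*(k+1) + l10*(k+1) + l11*(3*k+2) := by
    apply (ZMod.natCast_eq_zero_iff _ _).mp
    push_cast at h4 ⊢
    linear_combination h4
  have d5 : 2*(2*k+1) ∣ l4 + l5*(3*k+2) + l6*(k+1) + l7*(k+1) + l8*k
      + l9*(k+1) + l10*(3*k+2) + l11*(3*k+1) := by
    apply (ZMod.natCast_eq_zero_iff _ _).mp
    push_cast at h5 ⊢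
    linear_combination h5
  exact aux_cases k l1 l3 l4 l5 l6 l7 l8 l9 l10 l11 (by omega) (by omega) (by omega)
    b5 b6 b7 b8 b9 b10 b11 hsum d2 d4 d5
end
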